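/- Let C > 0, M > 0, σ_a > 0, N > 0, C_k > 0, D_k ≠ 0 be reals, set R_k := D_k²/C_k, and for κ > 0 and m ∈ [0,1) define F(m) := (1−m)·N·R_k·(1 − σ_a⁻²/A*(m)). Then: (i) A*(0) > σ_a⁻² if and only if κ² < κ_c²(C), A*(0) = σ_a⁻² if and only if κ² = κ_c²(C), and A*(0) < σ_a⁻² if and only if κ² > κ_c²(C); (ii) if κ² ≥ κ_c²(C), then F(m) ≤ 0 for every m ∈ [0,1), so m = 0 is the only solution of F(m) = m in [0,1); (iii) if κ² < κ_c²(C), then F(0) > 0, F is strictly decreasing and continuous on [0,1), F(m) → −∞ as m → 1⁻, and there exists a unique m* ∈ (0,1) with F(m*) = m* (a symmetry-breaking phase transition at κ = κ_c). -/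

import Mathlib

/-! Rationalising the root gives, with `t = 1 - m` and `a = 4 C M D_k² σ_a⁻²`,
`σ_a⁻² / A*(m) = κ² (√((C_k/t)² + a) + C_k/t) / (2 D_k² t)`, so
`F(m) = N R_k t - (N κ² / 2C_k) (√((C_k/t)² + a) + C_k/t)`: an increasing linear term in `t` minus
a term that is strictly decreasing in `t` and blows up as `t → 0⁺`. Hence `F` is strictly
decreasing on `[0,1)` with limit `-∞` at `1`, and everything hinges on the sign of
`F(0) = N R_k (1 - κ²/κ_c²)`, which comes from `A*(0) = κ_c² σ_a⁻² / κ²`. The fixed point is then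
given by the intermediate value theorem. -/

open Filter Topology

/-- The critical noise level κ_c²(C). -/
noncomputable def kappaCrit (Ck Dk M σa C : ℝ) : ℝ :=
  (Real.sqrt (Ck ^ 2 + 4 * C * M * Dk ^ 2 * σa⁻¹ ^ 2) - Ck) / (2 * C * σa⁻¹ ^ 2 * M)

/-- A*(m), the unique nonnegative root of
C·κ²·M·A² + C_k·A − (1−m)²·D_k²·σ_a⁻²/κ² = 0. -/
noncomputable def Astar (Ck Dk M σa C κ m : ℝ) : ℝ :=
  (-Ck + Real.sqrt (Ck ^ 2 + 4 * C * M * Dk ^ 2 * σa⁻¹ ^ 2 * (1 - m) ^ 2)) /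
    (2 * C * κ ^ 2 * M)

open Set

lemma kappaCrit_pos {Ck Dk M σa C : ℝ} (hC : 0 < C) (hM : 0 < M) (hσa : σa ≠ 0) (hDk : Dk ≠ 0) :
    0 < kappaCrit Ck Dk M σa C := by
  refine div_pos (sub_pos.2 (Real.lt_sqrt_of_sq_lt ?_)) (by positivity)
  have : 0 < 4 * C * M * Dk ^ 2 * σa⁻¹ ^ 2 := by positivity
  linarith

lemma Astar_zero {Ck Dk M σa C κ : ℝ} (hσa : σa ≠ 0) :
    Astar Ck Dk M σa C κ 0 = kappaCrit Ck Dk M σa C * σa⁻¹ ^ 2 / κ ^ 2 := by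
  have hp : σa⁻¹ ^ 2 ≠ 0 := by positivity
  rw [Astar, kappaCrit, sub_zero, one_pow, mul_one, div_mul_eq_mul_div, div_div,
    ← mul_div_mul_right _ (2 * C * κ ^ 2 * M) hp]
  ring_nf

lemma div_Astar_eq {Ck Dk M σa C κ m : ℝ} (hC : 0 < C) (hM : 0 < M) (hσa : σa ≠ 0)
    (hDk : Dk ≠ 0) (hm : m < 1) :
    σa⁻¹ ^ 2 / Astar Ck Dk M σa C κ m =
      κ ^ 2 * (√((Ck / (1 - m)) ^ 2 + 4 * C * M * Dk ^ 2 * σa⁻¹ ^ 2) + Ck / (1 - m)) /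
        (2 * Dk ^ 2 * (1 - m)) := by
  set a := 4 * C * M * Dk ^ 2 * σa⁻¹ ^ 2 with ha_def
  set t := 1 - m
  have ht : 0 < t := sub_pos.2 hm
  have ha : 0 < a := by positivity
  set r := √((Ck / t) ^ 2 + a)
  have hr : r ^ 2 = (Ck / t) ^ 2 + a := Real.sq_sqrt (by positivity)
  have htr : Ck ^ 2 + a * t ^ 2 = (t * r) ^ 2 := by
    rw [mul_pow, hr]; field_simp
  have hnum : Ck < t * r :=
    lt_of_pow_lt_pow_left₀ 2 (by positivity) (by nlinarith [mul_pos ha (pow_pos ht 2)])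
  rw [Astar, htr, Real.sqrt_sq (by positivity), div_div_eq_mul_div,
    div_eq_div_iff (by linarith) (by positivity)]
  set u := Ck / t
  have hu : u * t = Ck := div_mul_cancel₀ Ck ht.ne'
  clear_value u r t a
  linear_combination (-(κ ^ 2 * t)) * (hr + ha_def) - κ ^ 2 * (r + u) * hu

/-- The map `F` in closed form: `b = N R_k`, `c = N κ² / (2 C_k)`, `a = 4 C M D_k² σ_a⁻²`. -/
noncomputable def selfConsistencyMap (a b c Ck m : ℝ) : ℝ :=
  b * (1 - m) - c * (√((Ck / (1 - m)) ^ 2 + a) + Ck / (1 - m))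

lemma one_sub_mul_one_sub_div_Astar {Ck Dk M σa C κ m : ℝ} (N : ℝ) (hC : 0 < C) (hM : 0 < M)
    (hσa : σa ≠ 0) (hDk : Dk ≠ 0) (hm : m < 1) :
    (1 - m) * N * (Dk ^ 2 / Ck) * (1 - σa⁻¹ ^ 2 / Astar Ck Dk M σa C κ m) =
      selfConsistencyMap (4 * C * M * Dk ^ 2 * σa⁻¹ ^ 2) (N * (Dk ^ 2 / Ck))
        (N * κ ^ 2 / (2 * Ck)) Ck m := by
  have ht : 1 - m ≠ 0 := (sub_pos.2 hm).ne'
  rw [div_Astar_eq hC hM hσa hDk hm, selfConsistencyMap]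
  field_simp

lemma tendsto_one_sub_nhdsLT_one : Tendsto (fun m : ℝ => 1 - m) (𝓝[<] 1) (𝓝[>] 0) := by
  refine tendsto_nhdsWithin_of_tendsto_nhds_of_eventually_within _ ?_ ?_
  · have h : Tendsto (fun m : ℝ => 1 - m) (𝓝 1) (𝓝 (1 - 1)) := tendsto_const_nhds.sub tendsto_id
    rw [sub_self] at h
    exact h.mono_left nhdsWithin_le_nhds
  · filter_upwards [self_mem_nhdsWithin] with m (hm : m < 1)
    exact sub_pos.2 hm

lemma tendsto_div_one_sub_nhdsLT_one {Ck : ℝ} (hCk : 0 < Ck) :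
    Tendsto (fun m : ℝ => Ck / (1 - m)) (𝓝[<] 1) atTop := by
  simpa only [div_eq_mul_inv, Function.comp_def] using
    (tendsto_inv_nhdsGT_zero.comp tendsto_one_sub_nhdsLT_one).const_mul_atTop hCk

section selfConsistencyMap

variable {a b c Ck : ℝ}

lemma strictAntiOn_selfConsistencyMap (hb : 0 ≤ b) (hc : 0 < c) (hCk : 0 < Ck) :
    StrictAntiOn (selfConsistencyMap a b c Ck) (Iio 1) := by
  intro x (hx : x < 1) y (hy : y < 1) hxy
  have hu : Ck / (1 - x) < Ck / (1 - y) :=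
    div_lt_div_of_pos_left hCk (sub_pos.2 hy) (by linarith)
  have hu₀ : 0 ≤ Ck / (1 - x) := div_nonneg hCk.le (sub_pos.2 hx).le
  have hsqrt : √((Ck / (1 - x)) ^ 2 + a) ≤ √((Ck / (1 - y)) ^ 2 + a) := by gcongr
  have hlin : b * (1 - y) ≤ b * (1 - x) := mul_le_mul_of_nonneg_left (by linarith) hb
  have hsum := mul_lt_mul_of_pos_left (add_lt_add_of_le_of_lt hsqrt hu) hc
  unfold selfConsistencyMap
  linarith

lemma continuousOn_selfConsistencyMap : ContinuousOn (selfConsistencyMap a b c Ck) (Iio 1) := by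
  have h : ∀ m ∈ Iio (1 : ℝ), 1 - m ≠ 0 := fun m (hm : m < 1) => (sub_pos.2 hm).ne'
  unfold selfConsistencyMap
  fun_prop (disch := exact h)

lemma tendsto_selfConsistencyMap_nhdsLT_one (hc : 0 < c) (hCk : 0 < Ck) :
    Tendsto (selfConsistencyMap a b c Ck) (𝓝[<] 1) atBot := by
  have hsum : Tendsto (fun m : ℝ => √((Ck / (1 - m)) ^ 2 + a) + Ck / (1 - m)) (𝓝[<] 1) atTop :=
    tendsto_atTop_mono (fun m => le_add_of_nonneg_left (Real.sqrt_nonneg _))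
      (tendsto_div_one_sub_nhdsLT_one hCk)
  have hlin : Tendsto (fun m : ℝ => b * (1 - m)) (𝓝[<] 1) (𝓝 (b * 0)) :=
    (tendsto_one_sub_nhdsLT_one.mono_right nhdsWithin_le_nhds).const_mul b
  have h := hlin.add_atBot (tendsto_neg_atTop_atBot.comp (hsum.const_mul_atTop hc))
  simp only [Function.comp_def, ← sub_eq_add_neg] at h
  exact h

end selfConsistencyMap

lemma existsUnique_mem_Ioo_eq_self {f : ℝ → ℝ} {a b : ℝ} (hab : a < b)
    (hcont : ContinuousOn f (Ico a b)) (hanti : StrictAntiOn f (Ico a b)) (ha : a < f a)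
    (hb : Tendsto f (𝓝[<] b) atBot) :
    ∃! m, m ∈ Ioo a b ∧ f m = m := by
  obtain ⟨m₀, hm₀, hfm₀⟩ : ∃ m₀ ∈ Ioo a b, f m₀ < a :=
    ((show ∀ᶠ x in 𝓝[<] b, x ∈ Ioo a b from Ioo_mem_nhdsLT hab).and
      (hb.eventually (eventually_lt_atBot a))).exists
  have hsub : Icc a m₀ ⊆ Ico a b := Icc_subset_Ico_right hm₀.2
  have hg : ContinuousOn (fun x => f x - x) (Icc a m₀) := (hcont.mono hsub).sub continuousOn_id
  obtain ⟨m, hm, hfm⟩ : ∃ m ∈ Ioo a m₀, f m - m = 0 := intermediate_value_Ioo' hm₀.1.le hg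
    ⟨show f m₀ - m₀ < 0 by linarith [hm₀.1], show 0 < f a - a by linarith⟩
  refine ⟨m, ⟨⟨hm.1, hm.2.trans hm₀.2⟩, sub_eq_zero.1 hfm⟩, ?_⟩
  rintro y ⟨hy, hfy⟩
  have hanti' : StrictAntiOn (fun x => f x - x) (Ico a b) :=
    fun x hx z hz hxz => by linarith [hanti hx hz hxz]
  exact hanti'.injOn (Ioo_subset_Ico_self hy) ⟨hm.1.le, hm.2.trans hm₀.2⟩
    (by simp only [hfy, sub_self, hfm])

theorem stmt1 (C M σa N Ck Dk κ : ℝ)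
    (hC : 0 < C) (hM : 0 < M) (hσa : 0 < σa) (hN : 0 < N) (hCk : 0 < Ck)
    (hDk : Dk ≠ 0) (hκ : 0 < κ)
    (F : ℝ → ℝ)
    (hF : ∀ m, F m = (1 - m) * N * (Dk ^ 2 / Ck) *
      (1 - σa⁻¹ ^ 2 / Astar Ck Dk M σa C κ m)) :
    -- (i)
    ((σa⁻¹ ^ 2 < Astar Ck Dk M σa C κ 0 ↔ κ ^ 2 < kappaCrit Ck Dk M σa C) ∧
      (Astar Ck Dk M σa C κ 0 = σa⁻¹ ^ 2 ↔ κ ^ 2 = kappaCrit Ck Dk M σa C) ∧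
      (Astar Ck Dk M σa C κ 0 < σa⁻¹ ^ 2 ↔ kappaCrit Ck Dk M σa C < κ ^ 2)) ∧
    -- (ii)
    (kappaCrit Ck Dk M σa C ≤ κ ^ 2 →
      (∀ m ∈ Set.Ico (0 : ℝ) 1, F m ≤ 0) ∧
      (∀ m ∈ Set.Ico (0 : ℝ) 1, F m = m → m = 0)) ∧
    -- (iii)
    (κ ^ 2 < kappaCrit Ck Dk M σa C →
      0 < F 0 ∧ StrictAntiOn F (Set.Ico (0 : ℝ) 1) ∧
      ContinuousOn F (Set.Ico (0 : ℝ) 1) ∧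
      Tendsto F (𝓝[<] (1 : ℝ)) atBot ∧
      ∃! m : ℝ, m ∈ Set.Ioo (0 : ℝ) 1 ∧ F m = m) := by
  have hp : 0 < σa⁻¹ ^ 2 := by positivity
  have hq : 0 < κ ^ 2 := by positivity
  have hK : 0 < kappaCrit Ck Dk M σa C := kappaCrit_pos hC hM hσa.ne' hDk
  have hA0 := Astar_zero (Ck := Ck) (Dk := Dk) (M := M) (C := C) (κ := κ) hσa.ne'
  set K := kappaCrit Ck Dk M σa C
  have hF0 : F 0 = N * (Dk ^ 2 / Ck) * (1 - κ ^ 2 / K) := by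
    rw [hF, hA0, sub_zero, one_mul, div_div_eq_mul_div, mul_comm K, mul_div_mul_left _ _ hp.ne']
  have hFeq : EqOn F (selfConsistencyMap (4 * C * M * Dk ^ 2 * σa⁻¹ ^ 2) (N * (Dk ^ 2 / Ck))
      (N * κ ^ 2 / (2 * Ck)) Ck) (Iio 1) :=
    fun m hm => (hF m).trans (one_sub_mul_one_sub_div_Astar N hC hM hσa.ne' hDk hm)
  have hanti : StrictAntiOn F (Ico 0 1) :=
    ((strictAntiOn_selfConsistencyMap (by positivity) (by positivity) hCk).congr
      hFeq.symm).mono Ico_subset_Iio_self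
  have hcont : ContinuousOn F (Ico 0 1) :=
    (continuousOn_selfConsistencyMap.congr hFeq).mono Ico_subset_Iio_self
  have htend : Tendsto F (𝓝[<] 1) atBot :=
    (tendsto_selfConsistencyMap_nhdsLT_one (by positivity) hCk).congr'
      (eventuallyEq_nhdsWithin_of_eqOn hFeq).symm
  refine ⟨⟨?_, ?_, ?_⟩, fun hle => ?_, fun hlt => ?_⟩
  · rw [hA0, lt_div_iff₀ hq, mul_comm _ (κ ^ 2), mul_lt_mul_iff_left₀ hp]
  · rw [hA0, div_eq_iff hq.ne', mul_comm _ (κ ^ 2), mul_left_inj' hp.ne', eq_comm]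
  · rw [hA0, div_lt_iff₀ hq, mul_comm _ (κ ^ 2), mul_lt_mul_iff_left₀ hp]
  · have hF0_nonpos : F 0 ≤ 0 := by
      rw [hF0]
      exact mul_nonpos_of_nonneg_of_nonpos (by positivity) (sub_nonpos.2 ((one_le_div hK).2 hle))
    have hF_nonpos : ∀ m ∈ Ico (0 : ℝ) 1, F m ≤ 0 := fun m hm =>
      (hanti.antitoneOn ⟨le_rfl, one_pos⟩ hm hm.1).trans hF0_nonpos
    exact ⟨hF_nonpos, fun m hm hFm => le_antisymm (hFm ▸ hF_nonpos m hm) hm.1⟩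
  · have hF0_pos : 0 < F 0 := by
      rw [hF0]
      exact mul_pos (by positivity) (sub_pos.2 ((div_lt_one hK).2 hlt))
    exact ⟨hF0_pos, hanti, hcont, htend,
      existsUnique_mem_Ioo_eq_self one_pos hcont hanti hF0_pos htend⟩
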